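/- Soundness of argument labels with respect to SLD: if Γ ⊢_Arg ⟨A : h⟩ with h a literal, then h is SLD-derivable from Π(Γ) ∪ A, and moreover A is a subset of the defeasible wffs of Γ. -/
import Mathlib


/-- Literals: atoms or their strong negations (`~p` treated as a fresh atom). -/
inductive Lit : Type
  | pos : ℕ → Lit
  | neg : ℕ → Lit
deriving DecidableEq

/-- Wffs of the propositional Horn-like language: literals (facts)
and rules `β ← α1,...,αk` with literal head and body. -/
inductive Wff : Type
  | lit : Lit → Wff
  | rule : Lit → List Lit → Wff
deriving DecidableEq

/-- SLD derivability: facts in `P` are derivable; if a rule of `P`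
has all its body literals derivable, its head is derivable. -/
inductive Sld (P : Set Wff) : Lit → Prop
  | fact {h : Lit} : Wff.lit h ∈ P → Sld P h
  | mp {h : Lit} {body : List Lit} : Wff.rule h body ∈ P →
      (∀ a ∈ body, Sld P a) → Sld P h

/-- A set of wffs is contradictory iff complementary literals `p` and `~p`
are both SLD-derivable from it. -/
def Contra (S : Set Wff) : Prop := ∃ n, Sld S (.pos n) ∧ Sld S (.neg n)

/-- The non-defeasible (strict) part Π(Γ) of a labeled theory. -/
def PiSet (Γ : Set (Set Wff × Wff)) : Set Wff := {f | (∅, f) ∈ Γ}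

/-- The defeasible wffs of Γ: those α with ⟨{α} : α⟩ ∈ Γ. -/
def Defeasibles (Γ : Set (Set Wff × Wff)) : Set Wff := {f | ({f}, f) ∈ Γ}

/-- All (defeasible and non-defeasible) wffs of Γ. -/
def AllWffs (Γ : Set (Set Wff × Wff)) : Set Wff := PiSet Γ ∪ Defeasibles Γ

/-- An argumentative theory: a finite set of basic declarative units
⟨∅ : α⟩ or ⟨{α} : α⟩ whose strict part is non-contradictory. -/
def IsArgTheory (Γ : Set (Set Wff × Wff)) : Prop :=
  Γ.Finite ∧ (∀ p ∈ Γ, p.1 = ∅ ∨ p.1 = {p.2}) ∧ ¬Contra (PiSet Γ)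

/-- Conclusions of the labeled consequence relation: wffs or conjunctions of literals. -/
inductive Concl : Type
  | wff : Wff → Concl
  | conj : List Lit → Concl

/-- The argumentative consequence relation ⊢_Arg, generated by
Intro-NR, Intro-RE, Intro-∧ and Elim-← (each with its consistency side condition). -/
inductive ArgDeriv (Γ : Set (Set Wff × Wff)) : Set Wff → Concl → Prop
  | introNR {f : Wff} : (∅, f) ∈ Γ → ArgDeriv Γ ∅ (.wff f)
  | introRE {Φ : Set Wff} {f : Wff} : (Φ, f) ∈ Γ → ¬Contra (PiSet Γ ∪ Φ) →
      ArgDeriv Γ Φ (.wff f)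
  | introAnd {L : List (Set Wff × Lit)} :
      (∀ p ∈ L, ArgDeriv Γ p.1 (.wff (.lit p.2))) →
      ¬Contra (PiSet Γ ∪ ⋃ p ∈ L, p.1) →
      ArgDeriv Γ (⋃ p ∈ L, p.1) (.conj (L.map Prod.snd))
  | elim {Φ₁ Φ₂ : Set Wff} {h : Lit} {body : List Lit} :
      ArgDeriv Γ Φ₁ (.wff (.rule h body)) →
      ArgDeriv Γ Φ₂ (.conj body) →
      ¬Contra (PiSet Γ ∪ Φ₁ ∪ Φ₂) →
      ArgDeriv Γ (Φ₁ ∪ Φ₂) (.wff (.lit h))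

lemma Sld.mono {P Q : Set Wff} (hPQ : P ⊆ Q) {h : Lit} (hs : Sld P h) : Sld Q h := by
  induction hs with
  | fact hm => exact Sld.fact (hPQ hm)
  | mp hm _ ih => exact Sld.mp (hPQ hm) ih

def ConclOK (Γ : Set (Set Wff × Wff)) (A : Set Wff) : Concl → Prop
  | .wff (.lit h) => Sld (PiSet Γ ∪ A) h
  | .wff (.rule h b) => Wff.rule h b ∈ PiSet Γ ∪ A
  | .conj L => ∀ a ∈ L, Sld (PiSet Γ ∪ A) a

lemma arg_sound_aux (Γ : Set (Set Wff × Wff)) (hΓ : IsArgTheory Γ)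
    {A : Set Wff} {c : Concl} (hd : ArgDeriv Γ A c) :
    A ⊆ Defeasibles Γ ∧ ConclOK Γ A c := by
  induction hd with
  | @introNR f hm =>
    refine ⟨by simp, ?_⟩
    have hf : f ∈ PiSet Γ := hm
    cases f with
    | lit h => exact Sld.fact (Or.inl hf)
    | rule h b => exact Or.inl hf
  | @introRE Φ f hm _ =>
    have h1 := hΓ.2.1 _ hm
    simp only at h1
    rcases h1 with h1 | h1
    · subst h1
      refine ⟨by simp, ?_⟩
      have hf : f ∈ PiSet Γ := hm
      cases f with
      | lit h => exact Sld.fact (Or.inl hf)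
      | rule h b => exact Or.inl hf
    · subst h1
      have hdef : f ∈ Defeasibles Γ := hm
      refine ⟨by simpa using hdef, ?_⟩
      have hf : f ∈ PiSet Γ ∪ ({f} : Set Wff) := Or.inr rfl
      cases f with
      | lit h => exact Sld.fact hf
      | rule h b => exact hf
  | @introAnd L hL _ ih =>
    constructor
    · intro x hx
      simp only [Set.mem_iUnion] at hx
      obtain ⟨p, hp, hxp⟩ := hx
      exact (ih p hp).1 hxp
    · intro a ha
      simp only [List.mem_map] at ha
      obtain ⟨p, hp, rfl⟩ := ha
      have := (ih p hp).2
      refine Sld.mono ?_ this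
      intro x hx
      rcases hx with hx | hx
      · exact Or.inl hx
      · exact Or.inr (Set.mem_biUnion hp hx)
  | @elim Φ₁ Φ₂ h body _ _ _ ih1 ih2 =>
    refine ⟨fun x hx => hx.elim (ih1.1 ·) (ih2.1 ·), ?_⟩
    have hrule : Wff.rule h body ∈ PiSet Γ ∪ (Φ₁ ∪ Φ₂) := by
      rcases ih1.2 with hr | hr
      · exact Or.inl hr
      · exact Or.inr (Or.inl hr)
    refine Sld.mp hrule fun a ha => ?_
    refine Sld.mono ?_ (ih2.2 a ha)
    intro x hx
    rcases hx with hx | hx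
    · exact Or.inl hx
    · exact Or.inr (Or.inr hx)

/-- Soundness of argument labels with respect to SLD. -/
theorem arg_sound (Γ : Set (Set Wff × Wff)) (hΓ : IsArgTheory Γ)
    (A : Set Wff) (h : Lit) (hd : ArgDeriv Γ A (.wff (.lit h))) :
    Sld (PiSet Γ ∪ A) h ∧ A ⊆ Defeasibles Γ := ⟨(arg_sound_aux Γ hΓ hd).2, (arg_sound_aux Γ hΓ hd).1⟩
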